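/- For the degree-2 curve with weights (1, 1/2, 1/1) i.e. ω = (1, 1/2, 1) and p_i = i, the maximum of r'(t) on [0,1] equals 8/3 and is attained at t = 1/2. -/

import Mathlib

/-!
With `ω = (1, 1/2, 1)` the curve is `r t = (t + t²) / (1 - t + t²)`. Writing `s = t - 1/2`,
its derivative is `r' t = (3/2 - 2 s²) / (s² + 3/4)²`: the numerator is largest and the
denominator smallest at `s = 0`, where the quotient is `(3/2) / (9/16) = 8/3`.
-/

/-- Bernstein polynomial `B_i^n(t) = C(n,i) t^i (1-t)^(n-i)`. -/
def bern (n i : ℕ) (t : ℝ) : ℝ := (n.choose i : ℝ) * t ^ i * (1 - t) ^ (n - i)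

/-- Weights of the degree-2 example. -/
noncomputable def w2 : Fin 3 → ℝ := ![1, 1/2, 1]

lemma one_sub_add_sq_pos (t : ℝ) : 0 < 1 - t + t ^ 2 := by
  nlinarith [sq_nonneg (t - 1/2)]

lemma rational_w2_eq (t : ℝ) :
    (∑ i : Fin 3, w2 i * (i : ℝ) * bern 2 i t) / (∑ i : Fin 3, w2 i * bern 2 i t)
      = (t + t ^ 2) / (1 - t + t ^ 2) := by
  simp only [Fin.sum_univ_three, w2, bern]
  norm_num [Matrix.cons_val_two, Matrix.tail_cons, Matrix.head_cons]
  ring_nf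

lemma hasDerivAt_rational_w2 (t : ℝ) :
    HasDerivAt (fun t : ℝ => (t + t ^ 2) / (1 - t + t ^ 2))
      ((1 + 2 * t - 2 * t ^ 2) / (1 - t + t ^ 2) ^ 2) t := by
  have hnum : HasDerivAt (fun t : ℝ => t + t ^ 2) (1 + 2 * t) t := by
    simpa using (hasDerivAt_id' t).fun_add (hasDerivAt_pow 2 t)
  have hden : HasDerivAt (fun t : ℝ => 1 - t + t ^ 2) (-1 + 2 * t) t := by
    simpa using ((hasDerivAt_const t (1 : ℝ)).fun_sub (hasDerivAt_id' t)).fun_add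
      (hasDerivAt_pow 2 t)
  have hne := (one_sub_add_sq_pos t).ne'
  refine (hnum.fun_div hden hne).congr_deriv ?_
  rw [div_left_inj' (pow_ne_zero 2 hne)]
  ring

lemma deriv_rational_w2_le (t : ℝ) :
    (1 + 2 * t - 2 * t ^ 2) / (1 - t + t ^ 2) ^ 2 ≤ 8 / 3 := by
  rw [div_le_iff₀ (pow_pos (one_sub_add_sq_pos t) 2)]
  -- `(8/3) (s² + 3/4)² - (3/2 - 2 s²) = (8/3) s⁴ + 6 s²` with `s = t - 1/2`
  nlinarith [sq_nonneg (t - 1/2), sq_nonneg ((t - 1/2) ^ 2)]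

theorem stmt_19
    (r : ℝ → ℝ)
    (hr : r = fun t => (∑ i : Fin 3, w2 i * (i : ℝ) * bern 2 i t) /
      (∑ i : Fin 3, w2 i * bern 2 i t)) :
    deriv r (1/2) = 8/3 ∧ ∀ t ∈ Set.Icc (0 : ℝ) 1, deriv r t ≤ 8/3 := by
  have hr' : r = fun t : ℝ => (t + t ^ 2) / (1 - t + t ^ 2) := by
    rw [hr]
    funext t
    exact rational_w2_eq t
  have hderiv (t : ℝ) : deriv r t = (1 + 2 * t - 2 * t ^ 2) / (1 - t + t ^ 2) ^ 2 := by
    rw [hr']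
    exact (hasDerivAt_rational_w2 t).deriv
  refine ⟨?_, fun t _ => ?_⟩
  · rw [hderiv]
    norm_num
  · rw [hderiv]
    exact deriv_rational_w2_le t
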